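/- arXiv:2605.29032 — 2 statements merged into one kernel-verified Lean document; each statement's English description precedes it below -/
import Mathlib

section
/- Online-to-minimax guarantee for simulator learning: Let P be the true transition kernel of a finite MDP (reward r with 0 ≤ r ≤ R_max, discount γ ∈ (0,1), initial distribution ρ₀), let 𝓜 be a nonempty set of transition kernels, let π_1, …, π_T be stationary policies, and let P̂_1, …, P̂_T ∈ 𝓜. For a kernel Q define the round-t loss ℓ_t(Q) = Σ_{(s,a)} d̄_{π_t}(s,a)·KL(P(·|s,a) ‖ Q(·|s,a)) (normalized occupancy under the true kernel P), and assume all values ℓ_t(Q) for Q ∈ 𝓜 ∪ {P̂_1,…,P̂_T} are finite. Define Regret_T = Σ_{t=1}^T ℓ_t(P̂_t) − inf_{Q∈𝓜} Σ_{t=1}^T ℓ_t(Q) and Δ_t = |V_{π_t}(P) − V_{π_t}(P̂_t)|. Then (1/T)·Σ_{t=1}^T Δ_t ≤ (γ·R_max/(1−γ)²) · sqrt( (1/2)·( inf_{Q∈𝓜} (1/T) Σ_{t=1}^T ℓ_t(Q) + Regret_T/T ) ). -/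
open Finset Real

/-- `p` is a probability mass function on a finite type. -/
def IsPMF {X : Type*} [Fintype X] (p : X → ℝ) : Prop :=
  (∀ x, 0 ≤ p x) ∧ ∑ x, p x = 1

/-- `P` is a transition kernel: each `P s a` is a pmf on states. -/
def IsKernel {S A : Type*} [Fintype S] [Fintype A] (P : S → A → S → ℝ) : Prop :=
  ∀ s a, IsPMF (P s a)

/-- `pol` is a stationary policy: each `pol s` is a pmf on actions. -/
def IsPolicy {S A : Type*} [Fintype S] [Fintype A] (pol : S → A → ℝ) : Prop :=
  ∀ s, IsPMF (pol s)

/-- `V` satisfies the Bellman evaluation equation for policy `pol` under kernel `P`,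
reward `r` and discount `γ`. -/
def IsValue {S A : Type*} [Fintype S] [Fintype A] (P : S → A → S → ℝ) (pol : S → A → ℝ)
    (r : S → A → ℝ) (γ : ℝ) (V : S → ℝ) : Prop :=
  ∀ s, V s = ∑ a, pol s a * (r s a + γ * ∑ s', P s a s' * V s')

/-- `d` is the (unnormalized) discounted state-action occupancy of `pol` under kernel `P`
with initial distribution `ρ₀` and discount `γ`. -/
def IsOcc {S A : Type*} [Fintype S] [Fintype A] (P : S → A → S → ℝ) (pol : S → A → ℝ)
    (ρ₀ : S → ℝ) (γ : ℝ) (d : S → A → ℝ) : Prop :=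
  ∀ s a, d s a = pol s a * (ρ₀ s + γ * ∑ x : S × A, d x.1 x.2 * P x.1 x.2 s)

/-- ℓ₁ distance between two pmfs on a finite type. -/
noncomputable def l1Dist {X : Type*} [Fintype X] (p q : X → ℝ) : ℝ :=
  ∑ x, |p x - q x|

/-- Total variation distance between two pmfs on a finite type. -/
noncomputable def tvDist {X : Type*} [Fintype X] (p q : X → ℝ) : ℝ :=
  (1 / 2) * ∑ x, |p x - q x|

/-- Kullback-Leibler divergence between two pmfs on a finite type (finite under
absolute continuity). -/
noncomputable def klF {X : Type*} [Fintype X] (p q : X → ℝ) : ℝ :=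
  ∑ x, p x * Real.log (p x / q x)

/-- `d_data` satisfies κ-coverage for the policy set `Pol` under kernel `P`:
every occupancy of a policy in `Pol` is dominated by `κ · d_data`. -/
def KappaCoverage {S A : Type*} [Fintype S] [Fintype A] (P : S → A → S → ℝ) (ρ₀ : S → ℝ)
    (γ : ℝ) (Pol : Set (S → A → ℝ)) (ddata : S → A → ℝ) (κ : ℝ) : Prop :=
  ∀ pol ∈ Pol, ∀ dpol : S → A → ℝ, IsOcc P pol ρ₀ γ dpol → ∀ s a, dpol s a ≤ κ * ddata s a

/-- Critic discrepancy `Δ_{D,P̂}(s,a)`. -/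
noncomputable def critDelta {S A : Type*} [Fintype S] (P Phat : S → A → S → ℝ)
    (D : S → A → S → ℝ) (s : S) (a : A) : ℝ :=
  (∑ s', P s a s' * D s a s') - ∑ s', Phat s a s' * D s a s'

/-- Supremum over the critic class of the critic discrepancy at `(s,a)`. -/
noncomputable def critSup {S A : Type*} [Fintype S] (𝒟 : Set (S → A → S → ℝ))
    (P Phat : S → A → S → ℝ) (s : S) (a : A) : ℝ :=
  sSup {y | ∃ D ∈ 𝒟, y = critDelta P Phat D s a}

/-!
By the simulation lemma, `V_π(P) - V_π(P̂)` is `γ` times the occupancy average of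
`∑ s', (P - P̂)(s') V̂(s')`. As `V̂` takes values in `[0, Rmax / (1 - γ)]`, each such term is at
most `Rmax / (1 - γ)` times the total variation distance between `P(·|s,a)` and `P̂(·|s,a)`, and
Pinsker's inequality bounds that distance by `√(KL / 2)`. Averaging over the rounds and applying
Jensen's inequality to `√` bounds the average value gap by `γ Rmax / (1 - γ)² · √(L / 2)`, where
`L` is the learner's average loss `(1/T) ∑ₜ ℓₜ(P̂ₜ)`; and `L` is the best average loss in the
class plus the average regret.
-/

open InformationTheory

lemma monotoneOn_log_add_inv_sq :
    MonotoneOn (fun t : ℝ => log t - 3 / 2 + 27 / (2 * (t + 2) ^ 2)) (Set.Ioi 0) := by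
  have hderiv : ∀ t : ℝ, 0 < t → HasDerivAt (fun t : ℝ => log t - 3 / 2 + 27 / (2 * (t + 2) ^ 2))
      (t⁻¹ - 27 / (t + 2) ^ 3) t := by
    intro t ht
    have hden : HasDerivAt (fun t : ℝ => 2 * (t + 2) ^ 2) (2 * (2 * (t + 2))) t := by
      simpa using (((hasDerivAt_id' t).add_const 2).pow 2).const_mul 2
    refine (((hasDerivAt_log ht.ne').sub_const (3 / 2)).add
      ((hasDerivAt_const t 27).div hden (by positivity))).congr_deriv ?_
    have : t + 2 ≠ 0 := by positivity
    field_simp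
    ring
  refine monotoneOn_of_hasDerivWithinAt_nonneg (convex_Ioi 0)
    (fun t ht => (hderiv t ht).continuousAt.continuousWithinAt)
    (fun t ht => (hderiv t (interior_subset ht)).hasDerivWithinAt) fun t ht => ?_
  rw [interior_Ioi] at ht
  have ht : (0 : ℝ) < t := ht
  -- `(t + 2) ^ 3 - 27 t = (t - 1) ^ 2 (t + 8)`
  rw [sub_nonneg, div_le_iff₀ (by positivity), inv_mul_eq_div, le_div_iff₀ ht]
  nlinarith [sq_nonneg (t - 1), mul_nonneg (sq_nonneg (t - 1)) ht.le]

/-- The derivative of `klFun t - 3 (t - 1)² / (2 (t + 2))` is `log t - 3/2 + 27 / (2 (t + 2)²)`,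
which is increasing and vanishes at `1`; so the difference is minimal at `t = 1`, where it is
`0`. -/
lemma sq_div_le_klFun {t : ℝ} (ht : 0 ≤ t) : 3 * (t - 1) ^ 2 / (2 * (t + 2)) ≤ klFun t := by
  set ψ : ℝ → ℝ := fun t => log t - 3 / 2 + 27 / (2 * (t + 2) ^ 2)
  set f : ℝ → ℝ := fun t => klFun t - 3 * (t - 1) ^ 2 / (2 * (t + 2))
  have hderiv : ∀ t : ℝ, 0 < t → HasDerivAt f (ψ t) t := by
    intro t ht
    have hnum : HasDerivAt (fun t : ℝ => 3 * (t - 1) ^ 2) (3 * (2 * (t - 1))) t := by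
      simpa using (((hasDerivAt_id' t).sub_const 1).pow 2).const_mul 3
    have hden : HasDerivAt (fun t : ℝ => 2 * (t + 2)) 2 t := by
      simpa using ((hasDerivAt_id' t).add_const 2).const_mul 2
    refine ((hasDerivAt_klFun ht.ne').sub (hnum.div hden (by positivity))).congr_deriv ?_
    have : t + 2 ≠ 0 := by positivity
    simp only [ψ]
    field_simp
    ring
  have hcont : ∀ t : ℝ, 0 ≤ t → ContinuousAt f t := fun t ht => by
    have : 2 * (t + 2) ≠ 0 := by positivity
    exact continuous_klFun.continuousAt.sub (by fun_prop (disch := exact this))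
  have hψ1 : ψ 1 = 0 := by norm_num [ψ]
  have hmin : IsMinOn f (Set.Ici 0) 1 := by
    refine isMinOn_Ici_of_deriv (hcont 0 le_rfl) (hcont 1 zero_le_one)
      (fun x hx => (hderiv x hx.1).differentiableAt.differentiableWithinAt)
      (fun x hx => (hderiv x (zero_lt_one.trans hx)).differentiableAt.differentiableWithinAt)
      (fun x hx => ?_) (fun x hx => ?_)
    · rw [(hderiv x hx.1).deriv, ← hψ1]
      exact monotoneOn_log_add_inv_sq hx.1 (Set.mem_Ioi.2 one_pos) hx.2.le
    · have hx : 1 < x := hx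
      rw [(hderiv x (zero_lt_one.trans hx)).deriv, ← hψ1]
      exact monotoneOn_log_add_inv_sq (Set.mem_Ioi.2 one_pos)
        (Set.mem_Ioi.2 (zero_lt_one.trans hx)) hx.le
  have := hmin (Set.mem_Ici.2 ht)
  norm_num [f, klFun_one] at this
  linarith

section PMF

variable {X : Type*} [Fintype X] {p q : X → ℝ}

lemma IsPMF.sum_mul_le {f : X → ℝ} {B : ℝ} (hp : IsPMF p) (hf : ∀ x, f x ≤ B) :
    ∑ x, p x * f x ≤ B :=
  calc ∑ x, p x * f x ≤ ∑ x, p x * B :=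
        sum_le_sum fun x _ => mul_le_mul_of_nonneg_left (hf x) (hp.1 x)
    _ = B := by rw [← sum_mul, hp.2, one_mul]

lemma IsPMF.le_sum_mul {f : X → ℝ} {B : ℝ} (hp : IsPMF p) (hf : ∀ x, B ≤ f x) :
    B ≤ ∑ x, p x * f x :=
  calc B = ∑ x, p x * B := by rw [← sum_mul, hp.2, one_mul]
    _ ≤ ∑ x, p x * f x := sum_le_sum fun x _ => mul_le_mul_of_nonneg_left (hf x) (hp.1 x)

lemma abs_sum_sub_mul_le_tvDist {f : X → ℝ} {a b : ℝ}
    (hpq : ∑ x, p x = ∑ x, q x) (hf : ∀ x, a ≤ f x ∧ f x ≤ b) :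
    |∑ x, (p x - q x) * f x| ≤ (b - a) * tvDist p q := by
  have hcenter : ∑ x, (p x - q x) * f x = ∑ x, (p x - q x) * (f x - (a + b) / 2) := by
    simp only [mul_sub, sum_sub_distrib, ← sum_mul, hpq, sub_self, zero_mul, sub_zero]
  rw [hcenter, tvDist, mul_sum, mul_sum]
  refine (abs_sum_le_sum_abs _ _).trans (sum_le_sum fun x _ => ?_)
  rw [abs_mul]
  have : |f x - (a + b) / 2| ≤ (b - a) / 2 := abs_le.2 ⟨by linarith [hf x], by linarith [hf x]⟩
  nlinarith [abs_nonneg (p x - q x)]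

lemma klF_eq_sum_mul_klFun (hsum : ∑ x, p x = ∑ x, q x) (habs : ∀ x, q x = 0 → p x = 0) :
    klF p q = ∑ x, q x * klFun (p x / q x) := by
  have hterm : ∀ x, q x * klFun (p x / q x) = p x * log (p x / q x) + (q x - p x) := by
    intro x
    by_cases hq : q x = 0
    · simp [hq, habs x hq]
    · rw [klFun_apply]
      field_simp
      ring
  simp only [hterm, sum_add_distrib, sum_sub_distrib, hsum, sub_self, add_zero, klF]

lemma sum_sq_div_le_klF (hp : IsPMF p) (hq : IsPMF q) (habs : ∀ x, 0 < p x → 0 < q x) :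
    ∑ x, 3 * (p x - q x) ^ 2 / (2 * (p x + 2 * q x)) ≤ klF p q := by
  have hzero : ∀ x, q x = 0 → p x = 0 := fun x hqx =>
    (hp.1 x).eq_or_lt.elim Eq.symm fun hpx => absurd hqx (habs x hpx).ne'
  rw [klF_eq_sum_mul_klFun (hp.2.trans hq.2.symm) hzero]
  refine sum_le_sum fun x _ => ?_
  rcases (hq.1 x).eq_or_lt with hqx | hqx
  · simp [← hqx, hzero x hqx.symm]
  · calc 3 * (p x - q x) ^ 2 / (2 * (p x + 2 * q x))
        = q x * (3 * (p x / q x - 1) ^ 2 / (2 * (p x / q x + 2))) := by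
          field_simp
      _ ≤ q x * klFun (p x / q x) :=
          mul_le_mul_of_nonneg_left (sq_div_le_klFun (div_nonneg (hp.1 x) hqx.le)) hqx.le

lemma klF_nonneg (hp : IsPMF p) (hq : IsPMF q) (habs : ∀ x, 0 < p x → 0 < q x) :
    0 ≤ klF p q :=
  (sum_nonneg fun x _ => by have := hp.1 x; have := hq.1 x; positivity).trans
    (sum_sq_div_le_klF hp hq habs)

/-- **Pinsker's inequality**, from Cauchy–Schwarz with weights `2 (p + 2 q) / 3`, which sum
to `2`. -/
lemma tvDist_le_sqrt_klF (hp : IsPMF p) (hq : IsPMF q) (habs : ∀ x, 0 < p x → 0 < q x) :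
    tvDist p q ≤ √(klF p q / 2) := by
  set r : X → ℝ := fun x => 3 * (p x - q x) ^ 2 / (2 * (p x + 2 * q x))
  set u : X → ℝ := fun x => 2 * (p x + 2 * q x) / 3
  have hr : ∀ x, 0 ≤ r x := fun x => by have := hp.1 x; have := hq.1 x; positivity
  have hu : ∀ x, 0 ≤ u x := fun x => by have := hp.1 x; have := hq.1 x; positivity
  have hru : ∀ x, |p x - q x| = √(r x) * √(u x) := by
    intro x
    rw [← sqrt_mul (hr x), ← sqrt_sq_eq_abs]
    congr 1
    rcases (add_nonneg (hp.1 x) (mul_nonneg zero_le_two (hq.1 x))).eq_or_lt with h0 | h0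
    · have : p x = q x := by nlinarith [hp.1 x, hq.1 x]
      simp [r, this]
    · simp only [r, u]
      field_simp
      rw [mul_div_assoc, div_self (by linarith), mul_one]
  have hu_sum : ∑ x, u x = 2 := by
    simp only [u, ← sum_div, sum_add_distrib, ← mul_sum, hp.2, hq.2]
    norm_num
  calc tvDist p q = (1 / 2) * ∑ x, √(r x) * √(u x) := by simp only [tvDist, hru]
    _ ≤ (1 / 2) * (√(∑ x, r x) * √(∑ x, u x)) := by
        gcongr
        exact Real.sum_sqrt_mul_sqrt_le _ hr hu
    _ ≤ (1 / 2) * (√(klF p q) * √2) := by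
        rw [hu_sum]
        gcongr
        exact sum_sq_div_le_klF hp hq habs
    _ = √(klF p q / 2) := by
        rw [sqrt_div' _ zero_le_two]
        field_simp
        rw [sq_sqrt zero_le_two, mul_comm]

end PMF

section MDP

variable {S A : Type*} [Fintype S] [Fintype A] {P Q : S → A → S → ℝ} {pol : S → A → ℝ}
  {r : S → A → ℝ} {Rmax γ : ℝ} {ρ₀ : S → ℝ} {d : S → A → ℝ} {V W : S → ℝ}

namespace IsValue

lemma nonneg [Nonempty S] (hV : IsValue P pol r γ V) (hP : IsKernel P) (hpol : IsPolicy pol)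
    (hr : ∀ s a, 0 ≤ r s a) (hγ0 : 0 ≤ γ) (hγ1 : γ < 1) (s : S) : 0 ≤ V s := by
  obtain ⟨s₀, -, hs₀⟩ := exists_min_image univ V univ_nonempty
  have hmin : γ * V s₀ ≤ V s₀ := by
    refine le_of_le_of_eq ?_ (hV s₀).symm
    exact (hpol s₀).le_sum_mul fun a => le_add_of_nonneg_of_le (hr s₀ a)
      (mul_le_mul_of_nonneg_left ((hP s₀ a).le_sum_mul fun s' => hs₀ s' (mem_univ _)) hγ0)
  nlinarith [hs₀ s (mem_univ _)]

lemma le_div [Nonempty S] (hV : IsValue P pol r γ V) (hP : IsKernel P) (hpol : IsPolicy pol)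
    (hr : ∀ s a, r s a ≤ Rmax) (hγ0 : 0 ≤ γ) (hγ1 : γ < 1) (s : S) : V s ≤ Rmax / (1 - γ) := by
  obtain ⟨s₁, -, hs₁⟩ := exists_max_image univ V univ_nonempty
  have hmax : V s₁ ≤ Rmax + γ * V s₁ := by
    refine le_of_eq_of_le (hV s₁) ?_
    exact (hpol s₁).sum_mul_le fun a => add_le_add (hr s₁ a)
      (mul_le_mul_of_nonneg_left ((hP s₁ a).sum_mul_le fun s' => hs₁ s' (mem_univ _)) hγ0)
  rw [le_div_iff₀ (by linarith)]
  nlinarith [hs₁ s (mem_univ _)]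

end IsValue

lemma sum_policy_mul_sum_kernel (hP : IsKernel P) (hpol : IsPolicy pol) (g : S × A → ℝ) :
    ∑ x : S × A, pol x.1 x.2 * ∑ y : S × A, g y * P y.1 y.2 x.1 = ∑ y, g y := by
  rw [Fintype.sum_prod_type]
  simp only [← sum_mul, (hpol _).2, one_mul]
  rw [sum_comm]
  simp only [← mul_sum, (hP _ _).2, mul_one]

namespace IsOcc

lemma sum_eq (hd : IsOcc P pol ρ₀ γ d) (hP : IsKernel P) (hpol : IsPolicy pol) (hρ : IsPMF ρ₀)
    (hγ1 : γ < 1) : ∑ x : S × A, d x.1 x.2 = 1 / (1 - γ) := by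
  have hstart : ∑ x : S × A, pol x.1 x.2 * ρ₀ x.1 = 1 := by
    simp only [Fintype.sum_prod_type, ← sum_mul, (hpol _).2, one_mul, hρ.2]
  have hfix : ∑ x : S × A, d x.1 x.2 = 1 + γ * ∑ x : S × A, d x.1 x.2 := by
    calc ∑ x : S × A, d x.1 x.2
        = ∑ x : S × A, (pol x.1 x.2 * ρ₀ x.1
            + γ * (pol x.1 x.2 * ∑ y : S × A, d y.1 y.2 * P y.1 y.2 x.1)) :=
          sum_congr rfl fun x _ => by rw [hd]; ring
      _ = 1 + γ * ∑ x : S × A, d x.1 x.2 := by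
          rw [sum_add_distrib, ← mul_sum, hstart,
            sum_policy_mul_sum_kernel hP hpol fun y => d y.1 y.2]
  rw [eq_div_iff (by linarith)]
  linarith

/-- The negative part `e` of `d` satisfies `e ≤ γ · (transport of e)`, so its total mass is at
most `γ` times itself, hence zero. -/
lemma nonneg (hd : IsOcc P pol ρ₀ γ d) (hP : IsKernel P) (hpol : IsPolicy pol) (hρ : IsPMF ρ₀)
    (hγ0 : 0 ≤ γ) (hγ1 : γ < 1) (s : S) (a : A) : 0 ≤ d s a := by
  set e : S × A → ℝ := fun x => max (-d x.1 x.2) 0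
  have he : ∀ x, e x ≤ γ * (pol x.1 x.2 * ∑ y : S × A, e y * P y.1 y.2 x.1) := by
    intro x
    have htrans : 0 ≤ pol x.1 x.2 * ∑ y : S × A, e y * P y.1 y.2 x.1 :=
      mul_nonneg ((hpol x.1).1 x.2)
        (sum_nonneg fun y _ => mul_nonneg (le_max_right _ _) ((hP y.1 y.2).1 x.1))
    refine max_le ?_ (by positivity)
    have hlow : ∑ y : S × A, -e y * P y.1 y.2 x.1 ≤ ∑ y : S × A, d y.1 y.2 * P y.1 y.2 x.1 :=
      sum_le_sum fun y _ => mul_le_mul_of_nonneg_right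
        (neg_le.1 (le_max_left _ _)) ((hP y.1 y.2).1 x.1)
    have := mul_le_mul_of_nonneg_left hlow (mul_nonneg hγ0 ((hpol x.1).1 x.2))
    simp only [neg_mul, sum_neg_distrib] at this
    rw [hd]
    nlinarith [mul_nonneg ((hpol x.1).1 x.2) (hρ.1 x.1)]
  have hsum : ∑ x, e x ≤ γ * ∑ x, e x := by
    calc ∑ x, e x ≤ ∑ x : S × A, γ * (pol x.1 x.2 * ∑ y : S × A, e y * P y.1 y.2 x.1) :=
          sum_le_sum fun x _ => he x
      _ = γ * ∑ x, e x := by rw [← mul_sum, sum_policy_mul_sum_kernel hP hpol]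
  have hzero : ∑ x, e x = 0 :=
    le_antisymm (by nlinarith) (sum_nonneg fun x _ => le_max_right _ _)
  have := (sum_eq_zero_iff_of_nonneg fun x _ => le_max_right _ _).1 hzero (s, a) (mem_univ _)
  simpa [e] using this

lemma sum_mul_eq_of_bellman (hd : IsOcc P pol ρ₀ γ d) (f : S → A → ℝ)
    (hW : ∀ s, W s = ∑ a, pol s a * (f s a + γ * ∑ s', P s a s' * W s')) :
    ∑ s, ρ₀ s * W s = ∑ x : S × A, d x.1 x.2 * f x.1 x.2 := by
  set μ : S → ℝ := fun s => ρ₀ s + γ * ∑ y : S × A, d y.1 y.2 * P y.1 y.2 s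
  have hforward : ∑ s, μ s * W s
      = ∑ x : S × A, d x.1 x.2 * f x.1 x.2 + γ * ∑ x : S × A, d x.1 x.2 *
          ∑ s', P x.1 x.2 s' * W s' := by
    rw [Fintype.sum_prod_type, Fintype.sum_prod_type, mul_sum, ← sum_add_distrib]
    refine sum_congr rfl fun s _ => ?_
    rw [hW s, mul_sum, mul_sum, ← sum_add_distrib]
    exact sum_congr rfl fun a _ => by rw [hd s a]; ring
  have hbackward : ∑ s, μ s * W s
      = ∑ s, ρ₀ s * W s + γ * ∑ x : S × A, d x.1 x.2 * ∑ s', P x.1 x.2 s' * W s' := by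
    simp only [μ, add_mul, sum_add_distrib, sum_mul, mul_sum]
    rw [sum_comm (s := univ) (t := univ)]
    congr 1
    exact sum_congr rfl fun _ _ => sum_congr rfl fun _ _ => by ring
  linarith

lemma sum_value_sub_eq (hd : IsOcc P pol ρ₀ γ d) (hV : IsValue P pol r γ V)
    (hW : IsValue Q pol r γ W) :
    ∑ s, ρ₀ s * V s - ∑ s, ρ₀ s * W s
      = ∑ x : S × A, d x.1 x.2 * (γ * ∑ s', (P x.1 x.2 s' - Q x.1 x.2 s') * W s') := by
  rw [← sum_sub_distrib]
  simp only [← mul_sub]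
  refine hd.sum_mul_eq_of_bellman (W := fun s => V s - W s)
    (fun s a => γ * ∑ s', (P s a s' - Q s a s') * W s') fun s => ?_
  rw [hV s, hW s, ← sum_sub_distrib]
  refine sum_congr rfl fun a _ => ?_
  simp only [sub_mul, mul_sub, sum_sub_distrib]
  ring

lemma abs_sum_value_sub_le [Nonempty S] (hd : IsOcc P pol ρ₀ γ d) (hP : IsKernel P)
    (hQ : IsKernel Q) (habs : ∀ s a s', 0 < P s a s' → 0 < Q s a s') (hpol : IsPolicy pol)
    (hρ : IsPMF ρ₀) (hr : ∀ s a, 0 ≤ r s a ∧ r s a ≤ Rmax) (hγ0 : 0 ≤ γ) (hγ1 : γ < 1)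
    (hV : IsValue P pol r γ V) (hW : IsValue Q pol r γ W) :
    |∑ s, ρ₀ s * V s - ∑ s, ρ₀ s * W s| ≤ γ * Rmax / (1 - γ) ^ 2 *
      ∑ x : S × A, (1 - γ) * d x.1 x.2 * √(klF (P x.1 x.2) (Q x.1 x.2) / 2) := by
  have hW_mem : ∀ s, 0 ≤ W s ∧ W s ≤ Rmax / (1 - γ) := fun s =>
    ⟨hW.nonneg hQ hpol (fun s a => (hr s a).1) hγ0 hγ1 s,
      hW.le_div hQ hpol (fun s a => (hr s a).2) hγ0 hγ1 s⟩
  rw [hd.sum_value_sub_eq hV hW, mul_sum]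
  refine (abs_sum_le_sum_abs _ _).trans (sum_le_sum fun x _ => ?_)
  have hdx := hd.nonneg hP hpol hρ hγ0 hγ1 x.1 x.2
  have hcenter := abs_sum_sub_mul_le_tvDist ((hP x.1 x.2).2.trans (hQ x.1 x.2).2.symm) hW_mem
  have hpinsker := tvDist_le_sqrt_klF (hP x.1 x.2) (hQ x.1 x.2) (habs x.1 x.2)
  rw [sub_zero] at hcenter
  rw [abs_mul, abs_mul, abs_of_nonneg hdx, abs_of_nonneg hγ0]
  calc d x.1 x.2 * (γ * |∑ s', (P x.1 x.2 s' - Q x.1 x.2 s') * W s'|)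
      ≤ d x.1 x.2 * (γ * (Rmax / (1 - γ) * √(klF (P x.1 x.2) (Q x.1 x.2) / 2))) := by
        have hB : 0 ≤ Rmax / (1 - γ) := (hW_mem (Classical.arbitrary S)).1.trans
          (hW_mem (Classical.arbitrary S)).2
        gcongr
        exact hcenter.trans (mul_le_mul_of_nonneg_left hpinsker hB)
    _ = _ := by
        have : 1 - γ ≠ 0 := by linarith
        field_simp

end IsOcc

end MDP

open scoped Pointwise in
lemma sInf_setOf_const_mul {α : Type*} (M : Set α) (F : α → ℝ) {c : ℝ} (hc : 0 ≤ c) :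
    sInf {y | ∃ Q ∈ M, y = c * F Q} = c * sInf {y | ∃ Q ∈ M, y = F Q} := by
  have hset : {y | ∃ Q ∈ M, y = c * F Q} = c • {y | ∃ Q ∈ M, y = F Q} := by
    ext y
    simp only [Set.mem_smul_set, Set.mem_ofPred_eq, smul_eq_mul]
    constructor
    · rintro ⟨Q, hQ, rfl⟩
      exact ⟨_, ⟨Q, hQ, rfl⟩, rfl⟩
    · rintro ⟨z, ⟨Q, hQ, rfl⟩, rfl⟩
      exact ⟨Q, hQ, rfl⟩
  rw [hset, Real.sInf_smul_of_nonneg hc, smul_eq_mul]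

lemma avg_sum_mul_sqrt_le {ι κ : Type*} [Fintype ι] [Fintype κ] {w v : ι → κ → ℝ}
    (hw : ∀ i k, 0 ≤ w i k) (hw1 : ∀ i, ∑ k, w i k = 1) (hv : ∀ i k, 0 ≤ v i k) :
    (1 / Fintype.card ι) * ∑ i, ∑ k, w i k * √(v i k)
      ≤ √((1 / Fintype.card ι) * ∑ i, ∑ k, w i k * v i k) := by
  have hcs := Real.sum_sqrt_mul_sqrt_le (univ : Finset (ι × κ)) (f := fun x => w x.1 x.2)
    (g := fun x => w x.1 x.2 * v x.1 x.2) (fun x => hw x.1 x.2)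
    (fun x => mul_nonneg (hw x.1 x.2) (hv x.1 x.2))
  rw [Fintype.sum_prod_type, Fintype.sum_prod_type, Fintype.sum_prod_type] at hcs
  simp only [hw1, sum_const, card_univ, nsmul_eq_mul, mul_one, sqrt_mul (hw _ _),
    ← mul_assoc, mul_self_sqrt (hw _ _)] at hcs
  calc (1 / Fintype.card ι) * ∑ i, ∑ k, w i k * √(v i k)
      ≤ (1 / Fintype.card ι) * (√(Fintype.card ι) * √(∑ i, ∑ k, w i k * v i k)) := by gcongr
    _ = √((1 / Fintype.card ι) * ∑ i, ∑ k, w i k * v i k) := by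
      rw [← mul_assoc, one_div_mul_eq_div, sqrt_div_self', sqrt_mul (by positivity), one_div,
        one_div, sqrt_inv]

theorem online_to_minimax_general
    {S A : Type*} [Fintype S] [Fintype A] [Nonempty S] [Nonempty A]
    (P : S → A → S → ℝ) (hP : IsKernel P)
    (r : S → A → ℝ) (Rmax : ℝ) (hr : ∀ s a, 0 ≤ r s a ∧ r s a ≤ Rmax)
    (γ : ℝ) (hγ0 : 0 < γ) (hγ1 : γ < 1)
    (ρ₀ : S → ℝ) (hρ : IsPMF ρ₀)
    (T : ℕ)
    (M : Set (S → A → S → ℝ)) (hMker : ∀ Q ∈ M, IsKernel Q)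
    (pol : Fin T → S → A → ℝ) (hpol : ∀ t, IsPolicy (pol t))
    (Phat : Fin T → S → A → S → ℝ) (hPhatM : ∀ t, Phat t ∈ M)
    -- all losses of models in `M ∪ {Phat 1, …, Phat T}` are finite (absolute continuity)
    (habs : ∀ Q, (Q ∈ M ∨ ∃ t, Q = Phat t) → ∀ s a s', 0 < P s a s' → 0 < Q s a s')
    (dpol : Fin T → S → A → ℝ) (hd : ∀ t, IsOcc P (pol t) ρ₀ γ (dpol t))
    (V : Fin T → S → ℝ) (hV : ∀ t, IsValue P (pol t) r γ (V t))
    (Vhat : Fin T → S → ℝ) (hVhat : ∀ t, IsValue (Phat t) (pol t) r γ (Vhat t)) :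
    (1 / (T : ℝ)) * ∑ t, |(∑ s, ρ₀ s * V t s) - ∑ s, ρ₀ s * Vhat t s| ≤
      γ * Rmax / (1 - γ) ^ 2 *
        Real.sqrt ((1 / 2) *
          (sInf {y | ∃ Q ∈ M, y = (1 / (T : ℝ)) * ∑ t, ∑ x : S × A,
                (1 - γ) * dpol t x.1 x.2 * klF (P x.1 x.2) (Q x.1 x.2)} +
            ((∑ t, ∑ x : S × A,
                (1 - γ) * dpol t x.1 x.2 * klF (P x.1 x.2) (Phat t x.1 x.2)) -
              sInf {y | ∃ Q ∈ M, y = ∑ t, ∑ x : S × A,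
                (1 - γ) * dpol t x.1 x.2 * klF (P x.1 x.2) (Q x.1 x.2)}) / (T : ℝ))) := by
  have hγ : 0 < 1 - γ := by linarith
  have hRmax : 0 ≤ Rmax := (hr (Classical.arbitrary S) (Classical.arbitrary A)).1.trans
    (hr (Classical.arbitrary S) (Classical.arbitrary A)).2
  have hc : 0 ≤ γ * Rmax / (1 - γ) ^ 2 := div_nonneg (mul_nonneg hγ0.le hRmax) (sq_nonneg _)
  have hPhat : ∀ t, IsKernel (Phat t) := fun t => hMker _ (hPhatM t)
  have habsPhat : ∀ t s a s', 0 < P s a s' → 0 < Phat t s a s' := fun t =>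
    habs (Phat t) (Or.inr ⟨t, rfl⟩)
  set dbar : Fin T → S × A → ℝ := fun t x => (1 - γ) * dpol t x.1 x.2
  set halfKL : Fin T → S × A → ℝ := fun t x => klF (P x.1 x.2) (Phat t x.1 x.2) / 2
  have hround : ∀ t, |(∑ s, ρ₀ s * V t s) - ∑ s, ρ₀ s * Vhat t s|
      ≤ γ * Rmax / (1 - γ) ^ 2 * ∑ x, dbar t x * √(halfKL t x) := fun t =>
    (hd t).abs_sum_value_sub_le hP (hPhat t) (habsPhat t) (hpol t) hρ hr hγ0.le hγ1 (hV t)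
      (hVhat t)
  have hjensen := avg_sum_mul_sqrt_le (w := dbar) (v := halfKL)
    (fun t x => mul_nonneg hγ.le ((hd t).nonneg hP (hpol t) hρ hγ0.le hγ1 x.1 x.2))
    (fun t => by simp only [dbar, ← mul_sum, (hd t).sum_eq hP (hpol t) hρ hγ1]; field_simp)
    (fun t x => div_nonneg (klF_nonneg (hP x.1 x.2) (hPhat t x.1 x.2) (habsPhat t x.1 x.2))
      zero_le_two)
  rw [Fintype.card_fin] at hjensen
  rw [sInf_setOf_const_mul _ _ (by positivity)]
  calc (1 / (T : ℝ)) * ∑ t, |(∑ s, ρ₀ s * V t s) - ∑ s, ρ₀ s * Vhat t s|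
      ≤ (1 / (T : ℝ)) * ∑ t, γ * Rmax / (1 - γ) ^ 2 * ∑ x, dbar t x * √(halfKL t x) := by
        gcongr with t
        exact hround t
    _ = γ * Rmax / (1 - γ) ^ 2 * ((1 / (T : ℝ)) * ∑ t, ∑ x, dbar t x * √(halfKL t x)) := by
        rw [← mul_sum]; ring
    _ ≤ γ * Rmax / (1 - γ) ^ 2 * √((1 / (T : ℝ)) * ∑ t, ∑ x, dbar t x * halfKL t x) :=
        mul_le_mul_of_nonneg_left hjensen hc
    _ = _ := by
        congr 2
        simp only [dbar, halfKL, mul_div_assoc', ← sum_div]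
        ring

/-- **Online-to-minimax guarantee for simulator learning.** If the model player's models
`Phat t` achieve regret `Regret_T` for the occupancy-weighted KL losses against the
adversarially chosen policies, then the average value gap is controlled by the best
in-class average loss plus the per-round regret. -/
theorem online_to_minimax
    {S A : Type*} [Fintype S] [Fintype A] [Nonempty S] [Nonempty A]
    (P : S → A → S → ℝ) (hP : IsKernel P)
    (r : S → A → ℝ) (Rmax : ℝ) (hr : ∀ s a, 0 ≤ r s a ∧ r s a ≤ Rmax)
    (γ : ℝ) (hγ0 : 0 < γ) (hγ1 : γ < 1)
    (ρ₀ : S → ℝ) (hρ : IsPMF ρ₀)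
    (T : ℕ) (hT : 0 < T)
    (M : Set (S → A → S → ℝ)) (hM : M.Nonempty) (hMker : ∀ Q ∈ M, IsKernel Q)
    (pol : Fin T → S → A → ℝ) (hpol : ∀ t, IsPolicy (pol t))
    (Phat : Fin T → S → A → S → ℝ) (hPhatM : ∀ t, Phat t ∈ M)
    -- all losses of models in `M ∪ {Phat 1, …, Phat T}` are finite (absolute continuity)
    (habs : ∀ Q, (Q ∈ M ∨ ∃ t, Q = Phat t) → ∀ s a s', 0 < P s a s' → 0 < Q s a s')
    (dpol : Fin T → S → A → ℝ) (hd : ∀ t, IsOcc P (pol t) ρ₀ γ (dpol t))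
    (V : Fin T → S → ℝ) (hV : ∀ t, IsValue P (pol t) r γ (V t))
    (Vhat : Fin T → S → ℝ) (hVhat : ∀ t, IsValue (Phat t) (pol t) r γ (Vhat t)) :
    (1 / (T : ℝ)) * ∑ t, |(∑ s, ρ₀ s * V t s) - ∑ s, ρ₀ s * Vhat t s| ≤
      γ * Rmax / (1 - γ) ^ 2 *
        Real.sqrt ((1 / 2) *
          (sInf {y | ∃ Q ∈ M, y = (1 / (T : ℝ)) * ∑ t, ∑ x : S × A,
                (1 - γ) * dpol t x.1 x.2 * klF (P x.1 x.2) (Q x.1 x.2)} +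
            ((∑ t, ∑ x : S × A,
                (1 - γ) * dpol t x.1 x.2 * klF (P x.1 x.2) (Phat t x.1 x.2)) -
              sInf {y | ∃ Q ∈ M, y = ∑ t, ∑ x : S × A,
                (1 - γ) * dpol t x.1 x.2 * klF (P x.1 x.2) (Q x.1 x.2)}) / (T : ℝ))) :=
  online_to_minimax_general P hP r Rmax hr γ hγ0 hγ1 ρ₀ hρ T M hMker pol hpol Phat hPhatM habs dpol
    hd V hV Vhat hVhat
end

section
/- Minimax guarantee for the TV-critic game, finite-sample minimizer: Let P be the true kernel on a finite MDP (reward r with 0 ≤ r ≤ R_max, discount γ ∈ (0,1), initial distribution ρ₀), Π a nonempty set of stationary policies, and d_data a probability mass function on S × A satisfying κ-coverage for Π under P. Let 𝒟 be a nonempty set of functions D : S × A × S → [−1,1], let 𝓜 be a nonempty set of transition kernels, and for Q ∈ 𝓜 set J(Q) = Σ_{(s,a)} d_data(s,a)·sup_{D∈𝒟} Δ_{D,Q}(s,a). Assume ε_critic ≥ 0 satisfies, for every Q ∈ 𝓜 and every (s,a), 2·TV(P(·|s,a), Q(·|s,a)) ≤ sup_{D∈𝒟} Δ_{D,Q}(s,a)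 + ε_critic. Suppose Ĵ : 𝓜 → ℝ satisfies |Ĵ(Q) − J(Q)| ≤ ω for all Q ∈ 𝓜, and P̂ ∈ 𝓜 satisfies Ĵ(P̂) ≤ inf_{Q∈𝓜} Ĵ(Q) + η. Then for every π ∈ Π, |V_π(P) − V_π(P̂)| ≤ (γ·R_max/(1−γ)) · κ · ( (inf_{Q∈𝓜} J(Q) + 2ω + η)/2 + ε_critic/2 ). -/
open Finset Real

set_option linter.unusedSectionVars false

section Aux
variable {S A : Type*} [Fintype S] [Fintype A]
variable {S A : Type*} [Fintype S] [Fintype A]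

noncomputable def occSeq (P : S → A → S → ℝ) (pol : S → A → ℝ) (ρ₀ : S → ℝ) :
    ℕ → S → A → ℝ
  | 0 => fun s a => pol s a * ρ₀ s
  | (t+1) => fun s a => pol s a * ∑ x : S × A, occSeq P pol ρ₀ t x.1 x.2 * P x.1 x.2 s

lemma occSeq_nonneg {P : S → A → S → ℝ} {pol : S → A → ℝ} {ρ₀ : S → ℝ}
    (hP : IsKernel P) (hpol : IsPolicy pol) (hρ : IsPMF ρ₀) :
    ∀ t s a, 0 ≤ occSeq P pol ρ₀ t s a := by
  intro t
  induction t with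
  | zero => intro s a; exact mul_nonneg ((hpol s).1 a) (hρ.1 s)
  | succ t ih =>
    intro s a
    exact mul_nonneg ((hpol s).1 a)
      (Finset.sum_nonneg fun x _ => mul_nonneg (ih x.1 x.2) ((hP x.1 x.2).1 s))

lemma occSeq_mass {P : S → A → S → ℝ} {pol : S → A → ℝ} {ρ₀ : S → ℝ}
    (hP : IsKernel P) (hpol : IsPolicy pol) (hρ : IsPMF ρ₀) :
    ∀ t, ∑ x : S × A, occSeq P pol ρ₀ t x.1 x.2 = 1 := by
  intro t
  induction t with
  | zero =>
    rw [Fintype.sum_prod_type]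
    simp only [occSeq]
    calc ∑ s, ∑ a, pol s a * ρ₀ s = ∑ s, (∑ a, pol s a) * ρ₀ s := by
          refine Finset.sum_congr rfl fun s _ => ?_
          rw [Finset.sum_mul]
      _ = 1 := by
          simp only [(hpol _).2, one_mul]; exact hρ.2
  | succ t ih =>
    rw [Fintype.sum_prod_type]
    simp only [occSeq]
    calc ∑ s, ∑ a, pol s a * ∑ x : S × A, occSeq P pol ρ₀ t x.1 x.2 * P x.1 x.2 s
        = ∑ s, (∑ a, pol s a) * ∑ x : S × A, occSeq P pol ρ₀ t x.1 x.2 * P x.1 x.2 s := by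
          refine Finset.sum_congr rfl fun s _ => ?_
          rw [Finset.sum_mul]
      _ = ∑ s, ∑ x : S × A, occSeq P pol ρ₀ t x.1 x.2 * P x.1 x.2 s := by
          simp only [(hpol _).2, one_mul]
      _ = ∑ x : S × A, occSeq P pol ρ₀ t x.1 x.2 * ∑ s, P x.1 x.2 s := by
          rw [Finset.sum_comm]; congr 1; funext x; rw [Finset.mul_sum]
      _ = 1 := by simp only [(hP _ _).2, mul_one]; exact ih

lemma occSeq_le_one {P : S → A → S → ℝ} {pol : S → A → ℝ} {ρ₀ : S → ℝ}
    (hP : IsKernel P) (hpol : IsPolicy pol) (hρ : IsPMF ρ₀) :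
    ∀ t s a, occSeq P pol ρ₀ t s a ≤ 1 := by
  intro t s a
  have h := occSeq_mass hP hpol hρ (P := P) (pol := pol) (ρ₀ := ρ₀) t
  calc occSeq P pol ρ₀ t s a = occSeq P pol ρ₀ t (s, a).1 (s, a).2 := rfl
    _ ≤ ∑ x : S × A, occSeq P pol ρ₀ t x.1 x.2 :=
        Finset.single_le_sum (f := fun x : S × A => occSeq P pol ρ₀ t x.1 x.2)
          (fun x _ => occSeq_nonneg hP hpol hρ t x.1 x.2) (Finset.mem_univ (s, a))
    _ = 1 := h

lemma exists_occ {P : S → A → S → ℝ} {pol : S → A → ℝ} {ρ₀ : S → ℝ} {γ : ℝ}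
    (hP : IsKernel P) (hpol : IsPolicy pol) (hρ : IsPMF ρ₀) (hγ0 : 0 < γ) (hγ1 : γ < 1) :
    ∃ d : S → A → ℝ, IsOcc P pol ρ₀ γ d ∧ ∀ s a, 0 ≤ d s a := by
  set e := occSeq P pol ρ₀ with he
  have hγ0' : (0:ℝ) ≤ γ := le_of_lt hγ0
  have hsum : ∀ s a, Summable (fun t => γ ^ t * e t s a) := by
    intro s a
    apply Summable.of_nonneg_of_le
      (fun t => mul_nonneg (pow_nonneg hγ0' t) (occSeq_nonneg hP hpol hρ t s a))
      (fun t => by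
        have := occSeq_le_one hP hpol hρ t s a
        calc γ ^ t * e t s a ≤ γ ^ t * 1 :=
              mul_le_mul_of_nonneg_left this (pow_nonneg hγ0' t)
          _ = γ ^ t := mul_one _)
    exact summable_geometric_of_lt_one hγ0' hγ1
  refine ⟨fun s a => ∑' t, γ ^ t * e t s a, ?_, fun s a => tsum_nonneg
    (fun t => mul_nonneg (pow_nonneg hγ0' t) (occSeq_nonneg hP hpol hρ t s a))⟩
  intro s a
  beta_reduce
  have h0 : γ ^ 0 * e 0 s a = pol s a * ρ₀ s := by simp [he, occSeq]
  rw [Summable.tsum_eq_zero_add (hsum s a), h0]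
  have hstep : ∀ t : ℕ, γ ^ (t+1) * e (t+1) s a
      = (γ * pol s a) * ∑ x : S × A, γ ^ t * e t x.1 x.2 * P x.1 x.2 s := by
    intro t
    simp only [he, occSeq, pow_succ, Finset.mul_sum]
    exact Finset.sum_congr rfl fun x _ => by ring
  simp only [hstep]
  rw [tsum_mul_left]
  have hswap : ∑' t : ℕ, ∑ x : S × A, γ ^ t * e t x.1 x.2 * P x.1 x.2 s
      = ∑ x : S × A, (∑' t : ℕ, γ ^ t * e t x.1 x.2) * P x.1 x.2 s := by
    rw [Summable.tsum_finsetSum (fun x _ => (hsum x.1 x.2).mul_right _)]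
    congr 1; funext x; rw [tsum_mul_right]
  rw [hswap]; ring

variable [Nonempty S] [Nonempty A]

lemma value_bounds {Q : S → A → S → ℝ} {pol : S → A → ℝ} {r : S → A → ℝ} {Rmax : ℝ}
    {γ : ℝ} {W : S → ℝ} (hQ : IsKernel Q) (hpol : IsPolicy pol)
    (hr : ∀ s a, 0 ≤ r s a ∧ r s a ≤ Rmax) (hγ0 : 0 < γ) (hγ1 : γ < 1)
    (hW : IsValue Q pol r γ W) : ∀ s, 0 ≤ W s ∧ W s ≤ Rmax / (1 - γ) := by
  have h1γ : (0:ℝ) < 1 - γ := by linarith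
  obtain ⟨s₀, hs₀⟩ := Finite.exists_max W
  obtain ⟨s₁, hs₁⟩ := Finite.exists_min W
  have hub : W s₀ ≤ Rmax / (1 - γ) := by
    have key : W s₀ ≤ Rmax + γ * W s₀ := by
      calc W s₀ = ∑ a, pol s₀ a * (r s₀ a + γ * ∑ s', Q s₀ a s' * W s') := hW s₀
        _ ≤ ∑ a, pol s₀ a * (Rmax + γ * W s₀) := by
            refine Finset.sum_le_sum fun a _ => ?_
            refine mul_le_mul_of_nonneg_left ?_ ((hpol s₀).1 a)
            have hsum : ∑ s', Q s₀ a s' * W s' ≤ W s₀ := by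
              calc ∑ s', Q s₀ a s' * W s' ≤ ∑ s', Q s₀ a s' * W s₀ :=
                    Finset.sum_le_sum fun s' _ =>
                      mul_le_mul_of_nonneg_left (hs₀ s') ((hQ s₀ a).1 s')
                _ = W s₀ := by rw [← Finset.sum_mul, (hQ s₀ a).2, one_mul]
            have := (hr s₀ a).2
            nlinarith [hγ0.le]
        _ = (∑ a, pol s₀ a) * (Rmax + γ * W s₀) := by rw [Finset.sum_mul]
        _ = Rmax + γ * W s₀ := by rw [(hpol s₀).2, one_mul]
    rw [le_div_iff₀ h1γ]; nlinarith
  have hlb : 0 ≤ W s₁ := by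
    have key : γ * W s₁ ≤ W s₁ := by
      calc γ * W s₁ = (∑ a, pol s₁ a) * (γ * W s₁) := by rw [(hpol s₁).2, one_mul]
        _ = ∑ a, pol s₁ a * (0 + γ * W s₁) := by rw [Finset.sum_mul]; simp
        _ ≤ ∑ a, pol s₁ a * (r s₁ a + γ * ∑ s', Q s₁ a s' * W s') := by
            refine Finset.sum_le_sum fun a _ => ?_
            refine mul_le_mul_of_nonneg_left ?_ ((hpol s₁).1 a)
            have hsum : W s₁ ≤ ∑ s', Q s₁ a s' * W s' := by
              calc W s₁ = ∑ s', Q s₁ a s' * W s₁ := by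
                    rw [← Finset.sum_mul, (hQ s₁ a).2, one_mul]
                _ ≤ ∑ s', Q s₁ a s' * W s' :=
                    Finset.sum_le_sum fun s' _ =>
                      mul_le_mul_of_nonneg_left (hs₁ s') ((hQ s₁ a).1 s')
            have := (hr s₁ a).1
            nlinarith [hγ0.le]
        _ = W s₁ := (hW s₁).symm
    nlinarith
  intro s
  exact ⟨le_trans hlb (hs₁ s), le_trans (hs₀ s) hub⟩

lemma sim_identity {P Phat : S → A → S → ℝ} {pol : S → A → ℝ} {r : S → A → ℝ}
    {ρ₀ : S → ℝ} {γ : ℝ} {V W : S → ℝ} {d : S → A → ℝ}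
    (hV : IsValue P pol r γ V) (hW : IsValue Phat pol r γ W)
    (hd : IsOcc P pol ρ₀ γ d) :
    ∑ s, ρ₀ s * (V s - W s) =
      ∑ x : S × A, d x.1 x.2 * (γ * ∑ s', (P x.1 x.2 s' - Phat x.1 x.2 s') * W s') := by
  set f : S → ℝ := fun s => V s - W s with hf
  set g : S → A → ℝ := fun s a => γ * ∑ s', (P s a s' - Phat s a s') * W s' with hg
  have hfA : ∀ s, f s = ∑ a, pol s a * (g s a + γ * ∑ s', P s a s' * f s') := by
    intro s
    have : f s = ∑ a, (pol s a * (r s a + γ * ∑ s', P s a s' * V s')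
        - pol s a * (r s a + γ * ∑ s', Phat s a s' * W s')) := by
      rw [hf]; simp only [Finset.sum_sub_distrib]
      rw [← hV s, ← hW s]
    rw [this]
    refine Finset.sum_congr rfl fun a _ => ?_
    have e1 : ∑ s', (P s a s' - Phat s a s') * W s'
        = (∑ s', P s a s' * W s') - ∑ s', Phat s a s' * W s' := by
      rw [← Finset.sum_sub_distrib]
      exact Finset.sum_congr rfl fun s' _ => by ring
    have e2 : ∑ s', P s a s' * f s'
        = (∑ s', P s a s' * V s') - ∑ s', P s a s' * W s' := by
      rw [← Finset.sum_sub_distrib]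
      exact Finset.sum_congr rfl fun s' _ => by rw [hf]; ring
    rw [hg]
    simp only []
    rw [e1, e2]
    ring
  set m : S → ℝ := fun s => ρ₀ s + γ * ∑ x : S × A, d x.1 x.2 * P x.1 x.2 s with hm
  have hd' : ∀ s a, d s a = pol s a * m s := hd
  have key : ∑ x : S × A, d x.1 x.2 * (g x.1 x.2 + γ * ∑ s', P x.1 x.2 s' * f s')
      = ∑ s, m s * f s := by
    rw [Fintype.sum_prod_type]
    calc ∑ s, ∑ a, d s a * (g s a + γ * ∑ s', P s a s' * f s')
        = ∑ s, ∑ a, m s * (pol s a * (g s a + γ * ∑ s', P s a s' * f s')) := by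
          refine Finset.sum_congr rfl fun s _ => Finset.sum_congr rfl fun a _ => ?_
          rw [hd' s a]; ring
      _ = ∑ s, m s * ∑ a, pol s a * (g s a + γ * ∑ s', P s a s' * f s') := by
          refine Finset.sum_congr rfl fun s _ => ?_
          rw [Finset.mul_sum]
      _ = ∑ s, m s * f s := by
          refine Finset.sum_congr rfl fun s _ => ?_
          rw [← hfA s]
  have expand : ∑ s, m s * f s
      = ∑ s, ρ₀ s * f s + γ * ∑ x : S × A, d x.1 x.2 * ∑ s', P x.1 x.2 s' * f s' := by
    have e3 : ∑ s, m s * f s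
        = ∑ s, ρ₀ s * f s + γ * ∑ s, (∑ x : S × A, d x.1 x.2 * P x.1 x.2 s) * f s := by
      rw [hm]
      simp only [add_mul, Finset.sum_add_distrib]
      congr 1
      rw [Finset.mul_sum]
      exact Finset.sum_congr rfl fun s _ => by ring
    have e4 : ∑ s, (∑ x : S × A, d x.1 x.2 * P x.1 x.2 s) * f s
        = ∑ x : S × A, d x.1 x.2 * ∑ s', P x.1 x.2 s' * f s' := by
      calc ∑ s, (∑ x : S × A, d x.1 x.2 * P x.1 x.2 s) * f s
          = ∑ s, ∑ x : S × A, d x.1 x.2 * P x.1 x.2 s * f s := by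
            refine Finset.sum_congr rfl fun s _ => ?_
            rw [Finset.sum_mul]
        _ = ∑ x : S × A, ∑ s, d x.1 x.2 * P x.1 x.2 s * f s := Finset.sum_comm
        _ = ∑ x : S × A, d x.1 x.2 * ∑ s', P x.1 x.2 s' * f s' := by
            refine Finset.sum_congr rfl fun x _ => ?_
            rw [Finset.mul_sum]
            exact Finset.sum_congr rfl fun s _ => by ring
    rw [e3, e4]
  have lhs_split : ∑ x : S × A, d x.1 x.2 * (g x.1 x.2 + γ * ∑ s', P x.1 x.2 s' * f s')
      = ∑ x : S × A, d x.1 x.2 * g x.1 x.2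
        + γ * ∑ x : S × A, d x.1 x.2 * ∑ s', P x.1 x.2 s' * f s' := by
    rw [Finset.mul_sum, ← Finset.sum_add_distrib]
    exact Finset.sum_congr rfl fun x _ => by ring
  have final : ∑ s, ρ₀ s * f s = ∑ x : S × A, d x.1 x.2 * g x.1 x.2 := by
    have := key
    rw [lhs_split, expand] at this
    linarith
  rw [hf, hg] at final
  exact final
lemma crit_mem_bounds {𝒟 : Set (S → A → S → ℝ)} {P Q : S → A → S → ℝ}
    (hP : IsKernel P) (hQ : IsKernel Q)
    (h𝒟bdd : ∀ D ∈ 𝒟, ∀ s a s', D s a s' ∈ Set.Icc (-1 : ℝ) 1) :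
    ∀ D ∈ 𝒟, ∀ s a, critDelta P Q D s a ∈ Set.Icc (-2 : ℝ) 2 := by
  intro D hD s a
  have hb : ∀ (R : S → A → S → ℝ), IsKernel R → |∑ s', R s a s' * D s a s'| ≤ 1 := by
    intro R hR
    calc |∑ s', R s a s' * D s a s'| ≤ ∑ s', |R s a s' * D s a s'| :=
          Finset.abs_sum_le_sum_abs _ _
      _ ≤ ∑ s', R s a s' := by
          refine Finset.sum_le_sum fun s' _ => ?_
          rw [abs_mul, abs_of_nonneg ((hR s a).1 s')]
          have hD1 : |D s a s'| ≤ 1 := by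
            have := h𝒟bdd D hD s a s'
            rw [abs_le]; exact ⟨this.1, this.2⟩
          calc R s a s' * |D s a s'| ≤ R s a s' * 1 :=
                mul_le_mul_of_nonneg_left hD1 ((hR s a).1 s')
            _ = R s a s' := mul_one _
      _ = 1 := (hR s a).2
  have h1 := abs_le.mp (hb P hP)
  have h2 := abs_le.mp (hb Q hQ)
  constructor <;> [skip; skip] <;> (unfold critDelta) <;>
    [linarith [h1.1, h2.2]; linarith [h1.2, h2.1]]

lemma critSup_bounds {𝒟 : Set (S → A → S → ℝ)} {P Q : S → A → S → ℝ}
    (hP : IsKernel P) (hQ : IsKernel Q) (h𝒟ne : 𝒟.Nonempty)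
    (h𝒟bdd : ∀ D ∈ 𝒟, ∀ s a s', D s a s' ∈ Set.Icc (-1 : ℝ) 1) :
    ∀ s a, critSup 𝒟 P Q s a ∈ Set.Icc (-2 : ℝ) 2 := by
  intro s a
  obtain ⟨D₀, hD₀⟩ := h𝒟ne
  have hub : ∀ y ∈ {y | ∃ D ∈ 𝒟, y = critDelta P Q D s a}, y ≤ 2 := by
    rintro y ⟨D, hD, rfl⟩
    exact (crit_mem_bounds hP hQ h𝒟bdd D hD s a).2
  constructor
  · calc (-2 : ℝ) ≤ critDelta P Q D₀ s a := (crit_mem_bounds hP hQ h𝒟bdd D₀ hD₀ s a).1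
      _ ≤ critSup 𝒟 P Q s a := le_csSup ⟨2, hub⟩ ⟨D₀, hD₀, rfl⟩
  · exact csSup_le ⟨_, ⟨D₀, hD₀, rfl⟩⟩ hub


end Aux

/-- **Minimax guarantee for the TV-critic game (finite-sample minimizer).** If `Phat` is
an `η`-approximate minimizer of an empirical objective `Jhat` that uniformly
approximates the population objective `J` up to `ω`, then under κ-coverage the value
gap of every policy in `Pol` is bounded accordingly. -/
theorem tv_critic_finite_sample_minimizer
    {S A : Type*} [Fintype S] [Fintype A] [Nonempty S] [Nonempty A]
    (P : S → A → S → ℝ) (hP : IsKernel P)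
    (r : S → A → ℝ) (Rmax : ℝ) (hr : ∀ s a, 0 ≤ r s a ∧ r s a ≤ Rmax)
    (γ : ℝ) (hγ0 : 0 < γ) (hγ1 : γ < 1)
    (ρ₀ : S → ℝ) (hρ : IsPMF ρ₀)
    (Pol : Set (S → A → ℝ)) (hPolNe : Pol.Nonempty) (hPol : ∀ p ∈ Pol, IsPolicy p)
    (ddata : S → A → ℝ) (hdata : IsPMF (fun x : S × A => ddata x.1 x.2))
    (κ : ℝ) (hκ : 0 < κ)
    (hcov : KappaCoverage P ρ₀ γ Pol ddata κ)
    (𝒟 : Set (S → A → S → ℝ)) (h𝒟ne : 𝒟.Nonempty)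
    (h𝒟bdd : ∀ D ∈ 𝒟, ∀ s a s', D s a s' ∈ Set.Icc (-1 : ℝ) 1)
    (M : Set (S → A → S → ℝ)) (hM : M.Nonempty) (hMker : ∀ Q ∈ M, IsKernel Q)
    (εc : ℝ) (hεc : 0 ≤ εc)
    (hcritic : ∀ Q ∈ M, ∀ s a, 2 * tvDist (P s a) (Q s a) ≤ critSup 𝒟 P Q s a + εc)
    (Jhat : (S → A → S → ℝ) → ℝ) (ω η : ℝ)
    (hω : ∀ Q ∈ M,
      |Jhat Q - ∑ x : S × A, ddata x.1 x.2 * critSup 𝒟 P Q x.1 x.2| ≤ ω)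
    (Phat : S → A → S → ℝ) (hPhatM : Phat ∈ M)
    (hη : Jhat Phat ≤ sInf {y | ∃ Q ∈ M, y = Jhat Q} + η) :
    ∀ p ∈ Pol, ∀ V Vhat : S → ℝ, IsValue P p r γ V → IsValue Phat p r γ Vhat →
      |(∑ s, ρ₀ s * V s) - ∑ s, ρ₀ s * Vhat s| ≤
        γ * Rmax / (1 - γ) * κ *
          ((sInf {y | ∃ Q ∈ M, y = ∑ x : S × A,
              ddata x.1 x.2 * critSup 𝒟 P Q x.1 x.2} + 2 * ω + η) / 2 + εc / 2) := by
  intro p hp V Vhat hV hVhat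
  have hpol := hPol p hp
  have hPhatK := hMker Phat hPhatM
  have h1γ : (0:ℝ) < 1 - γ := by linarith
  have hRmax : (0:ℝ) ≤ Rmax := by
    obtain ⟨s⟩ := (inferInstance : Nonempty S)
    obtain ⟨a⟩ := (inferInstance : Nonempty A)
    exact le_trans (hr s a).1 (hr s a).2
  set B : ℝ := Rmax / (1 - γ) with hBdef
  have hB : 0 ≤ B := div_nonneg hRmax h1γ.le
  have hWb := value_bounds hPhatK hpol hr hγ0 hγ1 hVhat
  obtain ⟨d, hdocc, hdnn⟩ := exists_occ hP hpol hρ hγ0 hγ1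
  have hdle : ∀ s a, d s a ≤ κ * ddata s a := hcov p hp d hdocc
  have hid := sim_identity hV hVhat hdocc
  have hgap : (∑ s, ρ₀ s * V s) - ∑ s, ρ₀ s * Vhat s
      = ∑ x : S × A, d x.1 x.2 * (γ * ∑ s', (P x.1 x.2 s' - Phat x.1 x.2 s') * Vhat s') := by
    rw [← hid, ← Finset.sum_sub_distrib]
    exact Finset.sum_congr rfl fun s _ => by ring
  have htv0 : ∀ s a, 0 ≤ tvDist (P s a) (Phat s a) := fun s a =>
    mul_nonneg (by norm_num) (Finset.sum_nonneg fun _ _ => abs_nonneg _)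
  have hpt : ∀ s a, |γ * ∑ s', (P s a s' - Phat s a s') * Vhat s'|
      ≤ γ * B * tvDist (P s a) (Phat s a) := by
    intro s a
    have hz : ∑ s', (P s a s' - Phat s a s') * (B / 2) = 0 := by
      rw [← Finset.sum_mul, Finset.sum_sub_distrib, (hP s a).2, (hPhatK s a).2]
      ring
    have hc : ∑ s', (P s a s' - Phat s a s') * Vhat s'
        = ∑ s', (P s a s' - Phat s a s') * (Vhat s' - B / 2) := by
      have : ∑ s', (P s a s' - Phat s a s') * (Vhat s' - B / 2)
          = ∑ s', ((P s a s' - Phat s a s') * Vhat s'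
              - (P s a s' - Phat s a s') * (B / 2)) := by
        exact Finset.sum_congr rfl fun s' _ => by ring
      rw [this, Finset.sum_sub_distrib, hz, sub_zero]
    have habs : |∑ s', (P s a s' - Phat s a s') * (Vhat s' - B / 2)|
        ≤ ∑ s', |P s a s' - Phat s a s'| * (B / 2) := by
      calc |∑ s', (P s a s' - Phat s a s') * (Vhat s' - B / 2)|
          ≤ ∑ s', |(P s a s' - Phat s a s') * (Vhat s' - B / 2)| :=
            Finset.abs_sum_le_sum_abs _ _
        _ ≤ ∑ s', |P s a s' - Phat s a s'| * (B / 2) := by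
            refine Finset.sum_le_sum fun s' _ => ?_
            rw [abs_mul]
            refine mul_le_mul_of_nonneg_left ?_ (abs_nonneg _)
            rw [abs_le]
            constructor
            · linarith [(hWb s').1]
            · linarith [(hWb s').2]
    have heq : ∑ s', |P s a s' - Phat s a s'| * (B / 2)
        = B * tvDist (P s a) (Phat s a) := by
      rw [tvDist, ← Finset.sum_mul]; ring
    rw [abs_mul, abs_of_nonneg hγ0.le, hc]
    calc γ * |∑ s', (P s a s' - Phat s a s') * (Vhat s' - B / 2)|
        ≤ γ * (B * tvDist (P s a) (Phat s a)) := by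
          refine mul_le_mul_of_nonneg_left ?_ hγ0.le
          rw [← heq]; exact habs
      _ = γ * B * tvDist (P s a) (Phat s a) := by ring
  have step1 : |(∑ s, ρ₀ s * V s) - ∑ s, ρ₀ s * Vhat s|
      ≤ ∑ x : S × A, d x.1 x.2 * (γ * B * tvDist (P x.1 x.2) (Phat x.1 x.2)) := by
    rw [hgap]
    calc |∑ x : S × A, d x.1 x.2 * (γ * ∑ s', (P x.1 x.2 s' - Phat x.1 x.2 s') * Vhat s')|
        ≤ ∑ x : S × A, |d x.1 x.2 * (γ * ∑ s', (P x.1 x.2 s' - Phat x.1 x.2 s') * Vhat s')| :=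
          Finset.abs_sum_le_sum_abs _ _
      _ ≤ ∑ x : S × A, d x.1 x.2 * (γ * B * tvDist (P x.1 x.2) (Phat x.1 x.2)) := by
          refine Finset.sum_le_sum fun x _ => ?_
          rw [abs_mul, abs_of_nonneg (hdnn x.1 x.2)]
          exact mul_le_mul_of_nonneg_left (hpt x.1 x.2) (hdnn x.1 x.2)
  have step2 : ∑ x : S × A, d x.1 x.2 * (γ * B * tvDist (P x.1 x.2) (Phat x.1 x.2))
      ≤ ∑ x : S × A, (κ * ddata x.1 x.2) * (γ * B * tvDist (P x.1 x.2) (Phat x.1 x.2)) :=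
    Finset.sum_le_sum fun x _ => mul_le_mul_of_nonneg_right (hdle x.1 x.2)
      (mul_nonneg (mul_nonneg hγ0.le hB) (htv0 x.1 x.2))
  have step3 : ∑ x : S × A, (κ * ddata x.1 x.2) * (γ * B * tvDist (P x.1 x.2) (Phat x.1 x.2))
      = (γ * B * κ / 2) * ∑ x : S × A, ddata x.1 x.2 * (2 * tvDist (P x.1 x.2) (Phat x.1 x.2)) := by
    rw [Finset.mul_sum]
    exact Finset.sum_congr rfl fun x _ => by ring
  set JP : ℝ := ∑ x : S × A, ddata x.1 x.2 * critSup 𝒟 P Phat x.1 x.2 with hJP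
  have step4 : ∑ x : S × A, ddata x.1 x.2 * (2 * tvDist (P x.1 x.2) (Phat x.1 x.2))
      ≤ JP + εc := by
    calc ∑ x : S × A, ddata x.1 x.2 * (2 * tvDist (P x.1 x.2) (Phat x.1 x.2))
        ≤ ∑ x : S × A, ddata x.1 x.2 * (critSup 𝒟 P Phat x.1 x.2 + εc) :=
          Finset.sum_le_sum fun x _ => mul_le_mul_of_nonneg_left
            (hcritic Phat hPhatM x.1 x.2) (hdata.1 x)
      _ = JP + εc := by
          rw [hJP]
          have : ∑ x : S × A, ddata x.1 x.2 * (critSup 𝒟 P Phat x.1 x.2 + εc)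
              = (∑ x : S × A, ddata x.1 x.2 * critSup 𝒟 P Phat x.1 x.2)
                + (∑ x : S × A, ddata x.1 x.2) * εc := by
            rw [Finset.sum_mul, ← Finset.sum_add_distrib]
            exact Finset.sum_congr rfl fun x _ => by ring
          rw [this, hdata.2, one_mul]
  -- J bounds
  set Jset : Set ℝ := {y | ∃ Q ∈ M, y = ∑ x : S × A, ddata x.1 x.2 * critSup 𝒟 P Q x.1 x.2}
    with hJset
  set Jhatset : Set ℝ := {y | ∃ Q ∈ M, y = Jhat Q} with hJhatset
  have hJlb : ∀ Q ∈ M, (-2:ℝ) ≤ ∑ x : S × A, ddata x.1 x.2 * critSup 𝒟 P Q x.1 x.2 := by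
    intro Q hQ
    have hcs := critSup_bounds hP (hMker Q hQ) h𝒟ne h𝒟bdd
    calc (-2:ℝ) = ∑ x : S × A, ddata x.1 x.2 * (-2) := by
          rw [← Finset.sum_mul, hdata.2, one_mul]
      _ ≤ ∑ x : S × A, ddata x.1 x.2 * critSup 𝒟 P Q x.1 x.2 :=
          Finset.sum_le_sum fun x _ => mul_le_mul_of_nonneg_left
            (hcs x.1 x.2).1 (hdata.1 x)
  have hbddhat : BddBelow Jhatset := by
    refine ⟨-2 - ω, ?_⟩
    rintro y ⟨Q, hQ, rfl⟩
    have h1 := abs_le.mp (hω Q hQ)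
    have h2 := hJlb Q hQ
    linarith [h1.1]
  have hJPle : JP ≤ sInf Jset + 2 * ω + η := by
    have h5 : JP ≤ Jhat Phat + ω := by
      have := abs_le.mp (hω Phat hPhatM)
      linarith [this.1]
    have h6 : sInf Jhatset - ω ≤ sInf Jset := by
      refine le_csInf ?_ ?_
      · obtain ⟨Q₀, hQ₀⟩ := hM
        exact ⟨_, Q₀, hQ₀, rfl⟩
      · rintro y ⟨Q, hQ, rfl⟩
        have hle : sInf Jhatset ≤ Jhat Q := csInf_le hbddhat ⟨Q, hQ, rfl⟩
        have := abs_le.mp (hω Q hQ)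
        linarith [this.2]
    linarith
  -- final assembly
  have hcoef : (0:ℝ) ≤ γ * B * κ / 2 :=
    div_nonneg (mul_nonneg (mul_nonneg hγ0.le hB) hκ.le) (by norm_num)
  calc |(∑ s, ρ₀ s * V s) - ∑ s, ρ₀ s * Vhat s|
      ≤ (γ * B * κ / 2) * (JP + εc) := by
        refine le_trans step1 (le_trans step2 ?_)
        rw [step3]
        exact mul_le_mul_of_nonneg_left step4 hcoef
    _ ≤ (γ * B * κ / 2) * ((sInf Jset + 2 * ω + η) + εc) :=
        mul_le_mul_of_nonneg_left (by linarith) hcoef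
    _ = γ * Rmax / (1 - γ) * κ * ((sInf Jset + 2 * ω + η) / 2 + εc / 2) := by
        rw [hBdef]; ring
end
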